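/- arXiv:1706.09683 — 2 statements merged into one kernel-verified Lean document; each statement's English description precedes it below -/
import Mathlib

section
/- Let X ⊂ ℝ^d be a measurable bounded convex (or star-shaped with inradius r_X and diameter h_X) set, let r, s ∈ [1,∞], ℓ ∈ ℕ. Then there exists C > 0 depending only on d, a lower bound of r_X/h_X, r, s, and ℓ, such that for all q ∈ P^ℓ(X): C |X|^{1/r - 1/s} ‖q‖_{L^s(X)} ≤ ‖q‖_{L^r(X)} ≤ C^{-1} |X|^{1/r - 1/s} ‖q‖_{L^s(X)}. -/
/-!
Polynomials of degree at most `ℓ` form a finite-dimensional space. On it, `P ↦ ∫_S |P|` over a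
compact `S` with nonempty interior is a norm (a polynomial vanishing on an open set is zero), so
compactness of the unit sphere of coefficients bounds `|P|` on the closed unit ball by a multiple
of `∫_S |P|`. The affine change of variables `y ↦ z + R • y` preserves the degree and turns this
into `‖q‖_∞ |X| ≤ K ‖q‖_{L¹(X)}` whenever `B(z, εR) ⊆ X ⊆ B(z, R)`. Such a reverse inequality
compares all `Lᵖ` norms by Hölder: `‖q‖_u ≤ ‖q‖_∞ |X|^{1/u}` and `‖q‖_1 ≤ ‖q‖_t |X|^{1 - 1/t}`.
-/

open MeasureTheory Finset

/-- Membership in the local polynomial space `P^ℓ`. -/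
def MemPolySpace (d ℓ : ℕ) (f : (Fin d → ℝ) → ℝ) : Prop :=
  ∃ P : MvPolynomial (Fin d) ℝ, P.totalDegree ≤ ℓ ∧ ∀ x, f x = MvPolynomial.eval x P

/-- Membership in `P^ℓ` for an integer degree `ℓ`, with the convention `P^{-1} = {0}`. -/
def MemPolySpaceInt (d : ℕ) (ℓ : ℤ) (f : (Fin d → ℝ) → ℝ) : Prop :=
  if ℓ < 0 then (∀ x, f x = 0) else MemPolySpace d ℓ.toNat f

/-- `i`-th partial derivative. -/
noncomputable def pderiv' (d : ℕ) (f : (Fin d → ℝ) → ℝ) (i : Fin d) (x : Fin d → ℝ) : ℝ :=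
  fderiv ℝ f x (Pi.single i 1)

open Metric MvPolynomial
open scoped ENNReal

theorem IsCompact.exists_abs_le_mul_of_homogeneous {X E : Type*} [TopologicalSpace X]
    [NormedAddCommGroup E] [NormedSpace ℝ E] [ProperSpace E] {K : Set X} (hK : IsCompact K)
    {F : X → E → ℝ} (hF : Continuous (Function.uncurry F))
    (hF_smul : ∀ x (a : ℝ) w, F x (a • w) = a * F x w) {N : E → ℝ} (hN : Continuous N)
    (hN_smul : ∀ (a : ℝ) w, N (a • w) = |a| * N w) (hN_pos : ∀ w ≠ 0, 0 < N w) :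
    ∃ C > 0, ∀ x ∈ K, ∀ w, |F x w| ≤ C * N w := by
  have hN_ne : ∀ p ∈ K ×ˢ sphere (0 : E) 1, N p.2 ≠ 0 := fun p hp =>
    (hN_pos _ (ne_zero_of_mem_unit_sphere ⟨p.2, hp.2⟩)).ne'
  obtain ⟨C, hC⟩ := (hK.prod (isCompact_sphere 0 1)).bddAbove_image
    (hF.abs.continuousOn.div (hN.comp continuous_snd).continuousOn hN_ne)
  refine ⟨max C 1, by positivity, fun x hx w => ?_⟩
  rcases eq_or_ne w 0 with rfl | hw
  · have hN0 : N 0 = 0 := by simpa using hN_smul 0 0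
    simp [show F x 0 = 0 by simpa using hF_smul x 0 0, hN0]
  set u := ‖w‖⁻¹ • w
  have hu : u ∈ sphere (0 : E) 1 := by simp [u, norm_smul, hw]
  have hNu := hN_pos u (ne_zero_of_mem_unit_sphere ⟨u, hu⟩)
  have hFu : |F x u| ≤ max C 1 * N u :=
    ((div_le_iff₀ hNu).1 (hC ⟨(x, u), ⟨hx, hu⟩, rfl⟩)).trans (by gcongr; exact le_max_left _ _)
  have hw_eq : w = ‖w‖ • u := (smul_inv_smul₀ (norm_ne_zero_iff.2 hw) w).symm
  rw [hw_eq, hF_smul, hN_smul, abs_mul, abs_norm, mul_left_comm]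
  exact mul_le_mul_of_nonneg_left hFu (norm_nonneg w)

theorem MvPolynomial.eq_zero_of_eqOn_zero {σ : Type*} [Fintype σ] {P : MvPolynomial σ ℝ}
    {U : Set (σ → ℝ)} (hU : IsOpen U) (hne : U.Nonempty) (h : Set.EqOn (eval · P) 0 U) :
    P = 0 := by
  obtain ⟨y, hy⟩ := hne
  have hzero := (AnalyticOnNhd.eval_mvPolynomial P).eqOn_zero_of_preconnected_of_eventuallyEq_zero
    isPreconnected_univ (Set.mem_univ y) (Filter.eventuallyEq_of_mem (hU.mem_nhds hy) h)
  exact MvPolynomial.funext fun x => by simpa using hzero (Set.mem_univ x)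

theorem MvPolynomial.totalDegree_bind₁_le {σ τ R : Type*} [CommSemiring R]
    {f : σ → MvPolynomial τ R} (hf : ∀ i, (f i).totalDegree ≤ 1) (P : MvPolynomial σ R) :
    (bind₁ f P).totalDegree ≤ P.totalDegree := by
  conv_lhs => rw [P.as_sum, map_sum]
  refine totalDegree_finsetSum_le fun u hu => ?_
  rw [bind₁_monomial]
  calc (C (coeff u P) * ∏ i ∈ u.support, f i ^ u i).totalDegree
      ≤ ∑ i ∈ u.support, (f i ^ u i).totalDegree :=
        (totalDegree_mul _ _).trans <| by
          rw [totalDegree_C, zero_add]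
          exact totalDegree_finsetProd _ _
    _ ≤ ∑ i ∈ u.support, u i := Finset.sum_le_sum fun i _ =>
        (totalDegree_pow _ _).trans (mul_le_of_le_one_right' (hf i))
    _ ≤ P.totalDegree := le_totalDegree hu

theorem MvPolynomial.totalDegree_C_add_C_mul_X_le {σ R : Type*} [CommSemiring R] (a b : R) (i : σ) :
    (C a + C b * X i : MvPolynomial σ R).totalDegree ≤ 1 := by
  refine (totalDegree_add _ _).trans (max_le (by simp) ((totalDegree_mul _ _).trans ?_))
  simpa [X] using totalDegree_monomial_le (Finsupp.single i 1) (1 : R)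

theorem setIntegral_abs_pos_of_ne_zero {X : Type*} [TopologicalSpace X] [MeasurableSpace X]
    [OpensMeasurableSpace X] {μ : Measure X} [μ.IsOpenPosMeasure] {g : X → ℝ}
    (hg : Continuous g) {S : Set X} (hgS : IntegrableOn g S μ) {y : X} (hy : y ∈ interior S)
    (hgy : g y ≠ 0) : 0 < ∫ x in S, |g x| ∂μ := by
  rw [setIntegral_pos_iff_support_of_nonneg_ae (.of_forall fun x => abs_nonneg _) hgS.abs]
  have hopen : IsOpen (Function.support (fun x => |g x|) ∩ interior S) :=
    (isOpen_ne_fun hg.abs continuous_const).inter isOpen_interior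
  refine (hopen.measure_pos μ ⟨y, by simpa using hgy, hy⟩).trans_le (measure_mono ?_)
  exact Set.inter_subset_inter_right _ interior_subset

theorem setIntegral_closedBall_comp_add_smul {E F : Type*} [NormedAddCommGroup E]
    [NormedSpace ℝ E] [MeasurableSpace E] [BorelSpace E] [FiniteDimensional ℝ E] (μ : Measure E)
    [μ.IsAddHaarMeasure] [NormedAddCommGroup F] [NormedSpace ℝ F] (g : E → F) (z : E)
    {R ε : ℝ} (hR : 0 < R) (hε : 0 ≤ ε) :
    ∫ y in closedBall 0 ε, g (z + R • y) ∂μ =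
      (R ^ Module.finrank ℝ E)⁻¹ • ∫ x in closedBall z (R * ε), g x ∂μ := by
  rw [Measure.setIntegral_comp_smul_of_pos μ (fun u => g (z + u)) _ hR,
    smul_closedBall _ _ hε, smul_zero, Real.norm_of_nonneg hR.le]
  congr 1
  have := (measurePreserving_add_left μ z).setIntegral_preimage_emb
    (measurableEmbedding_addLeft z) g (closedBall z (R * ε))
  simpa [preimage_add_closedBall] using this

theorem eLpNorm_le_mul_rpow_mul_eLpNorm_of_eLpNorm_top_mul_le {α E : Type*} [MeasurableSpace α]
    [NormedAddCommGroup E] {μ : Measure α} {f : α → E} (hf : AEStronglyMeasurable f μ)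
    (hμ0 : μ Set.univ ≠ 0) (hμ : μ Set.univ ≠ ⊤) {K : ℝ≥0∞}
    (hK : eLpNorm f ⊤ μ * μ Set.univ ≤ K * eLpNorm f 1 μ) {t : ℝ≥0∞} (ht : 1 ≤ t) (u : ℝ≥0∞) :
    eLpNorm f u μ ≤ K * μ Set.univ ^ (1 / u.toReal - 1 / t.toReal) * eLpNorm f t μ := by
  set m := μ Set.univ
  have hsplit (a b : ℝ) : m ^ (a + b) = m ^ a * m ^ b := ENNReal.rpow_add _ _ hμ0 hμ
  have htop := eLpNorm_le_eLpNorm_mul_rpow_measure_univ (le_top : u ≤ ⊤) hf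
  have hone := eLpNorm_le_eLpNorm_mul_rpow_measure_univ ht hf
  simp only [ENNReal.toReal_top, div_zero, sub_zero, ENNReal.toReal_one, div_one] at htop hone
  have hm : m ^ (1 / u.toReal) = m * m ^ (1 / u.toReal - 1) := by
    simpa using hsplit 1 (1 / u.toReal - 1)
  calc eLpNorm f u μ ≤ eLpNorm f ⊤ μ * m ^ (1 / u.toReal) := htop
    _ = eLpNorm f ⊤ μ * m * m ^ (1 / u.toReal - 1) := by rw [hm, mul_assoc]
    _ ≤ K * eLpNorm f 1 μ * m ^ (1 / u.toReal - 1) := by gcongr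
    _ ≤ K * (eLpNorm f t μ * m ^ (1 - 1 / t.toReal)) * m ^ (1 / u.toReal - 1) := by gcongr
    _ = K * m ^ (1 / u.toReal - 1 / t.toReal) * eLpNorm f t μ := by
        rw [show 1 / u.toReal - 1 / t.toReal = (1 - 1 / t.toReal) + (1 / u.toReal - 1) by ring,
          hsplit]
        ring

theorem eLpNorm_equiv_of_eLpNorm_top_mul_le {α E : Type*} [MeasurableSpace α]
    [NormedAddCommGroup E] {μ : Measure α} {f : α → E} (hf : AEStronglyMeasurable f μ)
    (hμ0 : μ Set.univ ≠ 0) (hμ : μ Set.univ ≠ ⊤) {K : ℝ≥0∞} (hK0 : K ≠ 0) (hKtop : K ≠ ⊤)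
    (hK : eLpNorm f ⊤ μ * μ Set.univ ≤ K * eLpNorm f 1 μ) {r s : ℝ≥0∞} (hr : 1 ≤ r)
    (hs : 1 ≤ s) :
    K⁻¹ * μ Set.univ ^ (1 / r.toReal - 1 / s.toReal) * eLpNorm f s μ ≤ eLpNorm f r μ ∧
      eLpNorm f r μ ≤ K * μ Set.univ ^ (1 / r.toReal - 1 / s.toReal) * eLpNorm f s μ := by
  refine ⟨?_, eLpNorm_le_mul_rpow_mul_eLpNorm_of_eLpNorm_top_mul_le hf hμ0 hμ hK hs r⟩
  set e := 1 / r.toReal - 1 / s.toReal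
  have hsr := eLpNorm_le_mul_rpow_mul_eLpNorm_of_eLpNorm_top_mul_le hf hμ0 hμ hK hr s
  rw [← neg_sub] at hsr
  calc K⁻¹ * μ Set.univ ^ e * eLpNorm f s μ
      ≤ K⁻¹ * μ Set.univ ^ e * (K * μ Set.univ ^ (-e) * eLpNorm f r μ) := by gcongr
    _ = (K⁻¹ * K) * (μ Set.univ ^ (e + -e)) * eLpNorm f r μ := by
        rw [ENNReal.rpow_add _ _ hμ0 hμ]; ring
    _ = eLpNorm f r μ := by
        rw [ENNReal.inv_mul_cancel hK0 hKtop, add_neg_cancel, ENNReal.rpow_zero, one_mul,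
          one_mul]

theorem exists_abs_eval_le_mul_setIntegral {σ : Type*} [Fintype σ] (ℓ : ℕ)
    {K S : Set (σ → ℝ)} (hK : IsCompact K) (hS : IsCompact S) (hS' : (interior S).Nonempty) :
    ∃ C > 0, ∀ P : MvPolynomial σ ℝ, P.totalDegree ≤ ℓ →
      ∀ x ∈ K, |eval x P| ≤ C * ∫ y in S, |eval y P| := by
  let b := Module.finBasis ℝ (restrictTotalDegree σ ℝ ℓ)
  let poly : (Fin (Module.finrank ℝ (restrictTotalDegree σ ℝ ℓ)) → ℝ) → MvPolynomial σ ℝ :=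
    fun w => b.equivFun.symm w
  have poly_smul (a : ℝ) (w) : poly (a • w) = a • poly w := by
    simp only [poly, map_smul, Submodule.coe_smul]
  have poly_injective : Function.Injective poly :=
    Subtype.val_injective.comp b.equivFun.symm.injective
  have hcont : Continuous fun p : (σ → ℝ) × _ => eval p.1 (poly p.2) := by
    simp only [poly, Module.Basis.equivFun_symm_apply, Submodule.coe_sum, Submodule.coe_smul,
      map_sum, smul_eval]
    exact continuous_finsetSum _ fun i _ =>
      ((continuous_apply i).comp continuous_snd).mul ((continuous_eval _).comp continuous_fst)
  have hpos (w) (hw : w ≠ 0) : 0 < ∫ y in S, |eval y (poly w)| := by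
    obtain ⟨y, hy, hne⟩ : ∃ y ∈ interior S, eval y (poly w) ≠ 0 := by
      by_contra! h
      exact hw (poly_injective ((eq_zero_of_eqOn_zero isOpen_interior hS' h).trans
        (by simp [poly])))
    exact setIntegral_abs_pos_of_ne_zero (continuous_eval _)
      ((continuous_eval _).continuousOn.integrableOn_compact hS) hy hne
  obtain ⟨C, hC, hbound⟩ := hK.exists_abs_le_mul_of_homogeneous (F := fun x w => eval x (poly w))
    hcont (fun x a w => by simp [poly_smul])
    (continuous_parametric_integral_of_continuous (hcont.comp continuous_swap).abs hS)
    (fun a w => by simp [poly_smul, abs_mul, integral_const_mul]) hpos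
  refine ⟨C, hC, fun P hP x hx => ?_⟩
  simpa only [poly, LinearEquiv.symm_apply_apply] using
    hbound x hx (b.equivFun ⟨P, (mem_restrictTotalDegree _ _ _).2 hP⟩)

theorem exists_abs_eval_mul_pow_le_setIntegral {σ : Type*} [Fintype σ] (ℓ : ℕ) {ε : ℝ}
    (hε : 0 < ε) :
    ∃ C > 0, ∀ P : MvPolynomial σ ℝ, P.totalDegree ≤ ℓ → ∀ (z : σ → ℝ) (R : ℝ), 0 < R →
      ∀ x ∈ closedBall z R,
        |eval x P| * R ^ Fintype.card σ ≤ C * ∫ y in closedBall z (R * ε), |eval y P| := by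
  obtain ⟨c, hc, hunit⟩ := exists_abs_eval_le_mul_setIntegral ℓ
    (isCompact_closedBall (0 : σ → ℝ) 1) (isCompact_closedBall 0 ε)
    ⟨0, ball_subset_interior_closedBall (mem_ball_self hε)⟩
  refine ⟨c, hc, fun P hP z R hR x hx => ?_⟩
  set Q := bind₁ (fun i => C (z i) + C R * X i) P
  have hQ (y : σ → ℝ) : eval y Q = eval (z + R • y) P := by
    simp only [Q, eval, eval₂Hom_bind₁]
    congr 2
    funext i
    simp
  have hx' : R⁻¹ • (x - z) ∈ closedBall (0 : σ → ℝ) 1 := by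
    rw [mem_closedBall_zero_iff, norm_smul, norm_inv, Real.norm_of_nonneg hR.le,
      ← dist_eq_norm]
    exact inv_mul_le_one_of_le₀ (mem_closedBall.1 hx) hR.le
  have hQdeg : Q.totalDegree ≤ ℓ :=
    (totalDegree_bind₁_le (fun i => totalDegree_C_add_C_mul_X_le _ _ i) P).trans hP
  have key := hunit Q hQdeg _ hx'
  simp only [hQ, smul_inv_smul₀ hR.ne', add_sub_cancel] at key
  rw [setIntegral_closedBall_comp_add_smul volume (fun x => |eval x P|) z hR hε.le,
    smul_eq_mul, Module.finrank_fintype_fun_eq_card] at key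
  calc |eval x P| * R ^ Fintype.card σ
      ≤ c * ((R ^ Fintype.card σ)⁻¹ * ∫ y in closedBall z (R * ε), |eval y P|) *
          R ^ Fintype.card σ := by gcongr
    _ = c * ∫ y in closedBall z (R * ε), |eval y P| := by field_simp

theorem exists_eLpNorm_top_mul_measure_le (d ℓ : ℕ) {ε : ℝ} (hε : 0 < ε) :
    ∃ K : ℝ≥0∞, K ≠ 0 ∧ K ≠ ⊤ ∧ ∀ q : (Fin d → ℝ) → ℝ, MemPolySpace d ℓ q →
      ∀ (X : Set (Fin d → ℝ)) (z : Fin d → ℝ) (R : ℝ), 0 < R →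
        closedBall z (R * ε) ⊆ X → X ⊆ closedBall z R →
          eLpNorm q ⊤ (volume.restrict X) * volume X ≤ K * eLpNorm q 1 (volume.restrict X) := by
  obtain ⟨c, hc, hbound⟩ := exists_abs_eval_mul_pow_le_setIntegral (σ := Fin d) ℓ hε
  set v := volume (closedBall (0 : Fin d → ℝ) 1)
  refine ⟨ENNReal.ofReal c * v, mul_ne_zero (ENNReal.ofReal_pos.2 hc).ne'
    (measure_closedBall_pos volume _ one_pos).ne',
    ENNReal.mul_ne_top ENNReal.ofReal_ne_top measure_closedBall_lt_top.ne, ?_⟩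
  rintro q ⟨P, hP, hq⟩ X z R hR hBX hXB
  obtain rfl : q = (eval · P) := funext hq
  set I := ∫ y in closedBall z (R * ε), |eval y P|
  have hI : ENNReal.ofReal I = eLpNorm (eval · P) 1 (volume.restrict (closedBall z (R * ε))) := by
    rw [eLpNorm_one_eq_lintegral_enorm, ← ofReal_integral_norm_eq_lintegral_enorm
      ((continuous_eval P).continuousOn.integrableOn_compact (isCompact_closedBall _ _))]
    rfl
  have hsup : eLpNorm (eval · P) ⊤ (volume.restrict X) ≤ ENNReal.ofReal (c * I / R ^ d) := by
    refine (eLpNorm_mono_measure _ (Measure.restrict_mono hXB le_rfl)).trans ?_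
    rw [eLpNorm_exponent_top]
    refine eLpNormEssSup_le_of_ae_bound (ae_restrict_of_forall_mem measurableSet_closedBall
      fun x hx => ?_)
    rw [Real.norm_eq_abs, le_div_iff₀ (by positivity)]
    simpa using hbound P hP z R hR x hx
  have hvol : volume X ≤ ENNReal.ofReal (R ^ d) * v := by
    refine (measure_mono hXB).trans_eq ?_
    rw [Measure.addHaar_closedBall' volume z hR.le, Module.finrank_fintype_fun_eq_card,
      Fintype.card_fin]
  calc eLpNorm (eval · P) ⊤ (volume.restrict X) * volume X
      ≤ ENNReal.ofReal (c * I / R ^ d) * (ENNReal.ofReal (R ^ d) * v) := by gcongr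
    _ = ENNReal.ofReal c * v * ENNReal.ofReal I := by
        rw [← mul_assoc, ← ENNReal.ofReal_mul (by positivity), div_mul_cancel₀ _ (by positivity),
          ENNReal.ofReal_mul hc.le]
        ring
    _ ≤ ENNReal.ofReal c * v * eLpNorm (eval · P) 1 (volume.restrict X) := by
        rw [hI]
        gcongr

theorem MemPolySpace.continuous {d ℓ : ℕ} {q : (Fin d → ℝ) → ℝ} (hq : MemPolySpace d ℓ q) :
    Continuous q := by
  obtain ⟨P, -, hq⟩ := hq
  simpa only [← funext hq] using continuous_eval P

open ENNReal in
/-- **Direct and reverse Lebesgue embeddings for polynomials.**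
Let `r, s ∈ [1,∞]`, `ℓ ∈ ℕ`, and `ϱ > 0`.  There exists `C > 0` depending only on
`d`, `ϱ` (a lower bound of `r_X/h_X`), `r`, `s` and `ℓ` such that, for every bounded
convex measurable set `X ⊂ ℝ^d` that is shape-regular with parameter `ϱ`, and every
polynomial `q ∈ P^ℓ(X)`,
`C |X|^{1/r-1/s} ‖q‖_{L^s(X)} ≤ ‖q‖_{L^r(X)} ≤ C⁻¹ |X|^{1/r-1/s} ‖q‖_{L^s(X)}`. -/
theorem lebesgue_embeddings_polynomials (d ℓ : ℕ) (ϱ : ℝ) (hϱ : 0 < ϱ)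
    (r s : ℝ≥0∞) (hr : 1 ≤ r) (hs : 1 ≤ s) :
    ∃ C : ℝ≥0∞, 0 < C ∧ C < ⊤ ∧
      ∀ X : Set (Fin d → ℝ), MeasurableSet X → Convex ℝ X →
        ∀ z : Fin d → ℝ, ∀ R : ℝ, 0 < R →
          Metric.ball z (ϱ * R) ⊆ X → X ⊆ Metric.ball z R →
          ∀ q : (Fin d → ℝ) → ℝ, MemPolySpace d ℓ q →
            C * (volume X) ^ (1 / r.toReal - 1 / s.toReal) *
                eLpNorm q s (volume.restrict X) ≤ eLpNorm q r (volume.restrict X) ∧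
              eLpNorm q r (volume.restrict X) ≤
                C⁻¹ * (volume X) ^ (1 / r.toReal - 1 / s.toReal) *
                  eLpNorm q s (volume.restrict X) := by
  obtain ⟨K, hK0, hKtop, hK⟩ := exists_eLpNorm_top_mul_measure_le d ℓ (half_pos hϱ)
  refine ⟨K⁻¹, ENNReal.inv_pos.2 hKtop, ENNReal.inv_lt_top.2 (pos_iff_ne_zero.2 hK0), ?_⟩
  intro X _ _ z R hR hinner houter q hq
  have hBX : closedBall z (R * (ϱ / 2)) ⊆ X :=
    (closedBall_subset_ball (by nlinarith)).trans hinner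
  have hXB : X ⊆ closedBall z R := houter.trans ball_subset_closedBall
  have hX0 : volume X ≠ 0 :=
    ((measure_closedBall_pos volume z (by positivity)).trans_le (measure_mono hBX)).ne'
  have hXtop : volume X ≠ ⊤ := ((measure_mono hXB).trans_lt measure_closedBall_lt_top).ne
  rw [inv_inv, ← Measure.restrict_apply_univ]
  refine eLpNorm_equiv_of_eLpNorm_top_mul_le hq.continuous.aestronglyMeasurable
    (by rwa [Measure.restrict_apply_univ]) (by rwa [Measure.restrict_apply_univ]) hK0 hKtop ?_ hr hs
  rw [Measure.restrict_apply_univ]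
  exact hK q hq X z R hR hBX hXB
end

section
/- Let T ∈ T_h be a mesh element, k ≥ 0, l ∈ {k-1,k,k+1}, and consider the difference operators δ_T û_T := π_T^l(r_T û_T - v_T) and δ_{TF} û_T := π_F^k(r_T û_T - v_F), where r_T is the potential reconstruction of degree k+1 and û_T = (v_T,(v_F)_{F∈F_T}). Then for all û_T ∈ U_T^{k,l} and all φ ∈ P^k(T)^d: ((∇r_T - G_T)û_T - ∇δ_T û_T, φ)_T = ∑_{F∈F_T} ((δ_{TF} - δ_T)û_T, φ·n_{TF})_F. -/
open MeasureTheory Finset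

/-- Laplacian via iterated partial derivatives. -/
noncomputable def lap' (d : ℕ) (f : (Fin d → ℝ) → ℝ) (x : Fin d → ℝ) : ℝ :=
  ∑ i, pderiv' d (fun y => pderiv' d f i y) i x

/-! Integrating by parts turns `(∇r, φ)_T` and `(∇δ_T, φ)_T` into a cell term against `div φ`
plus face terms against `φ·n_{TF}`, and the definition of `G_T` has the same shape with `v_T`
and `v_F`. Since `l ≥ k - 1`, `div φ ∈ P^l`, so the cell terms combine into
`(π_T^l(r - v_T) - (r - v_T), div φ)_T = 0`; since `φ·n_{TF} ∈ P^k`, the face term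
`(r - v_F, φ·n_{TF})_F` equals `(δ_{TF}, φ·n_{TF})_F`. -/

namespace MvPolynomial

section
variable {R σ : Type*} [CommSemiring R] {P : MvPolynomial σ R} {i : σ}

theorem degree_lt_totalDegree_of_mem_support_pderiv {s : σ →₀ ℕ}
    (hs : s ∈ (pderiv i P).support) : s.degree < P.totalDegree := by
  rw [mem_support_iff, coeff_pderiv] at hs
  have h : (s + Finsupp.single i 1).degree ≤ P.totalDegree :=
    le_totalDegree (mem_support_iff.2 (left_ne_zero_of_mul hs))
  rw [map_add, Finsupp.degree_single] at h
  omega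

theorem totalDegree_pderiv_le : (pderiv i P).totalDegree ≤ P.totalDegree - 1 :=
  Finset.sup_le fun _ hs => by
    have := degree_lt_totalDegree_of_mem_support_pderiv hs
    change Finsupp.degree _ ≤ _
    omega

theorem pderiv_eq_zero_of_totalDegree_eq_zero (h : P.totalDegree = 0) : pderiv i P = 0 :=
  support_eq_empty.1 <| Finset.eq_empty_of_forall_notMem fun _ hs => by
    have := degree_lt_totalDegree_of_mem_support_pderiv hs
    omega

end

section
variable {𝕜 σ : Type*} [NontriviallyNormedField 𝕜] [Fintype σ]

theorem hasFDerivAt_eval (P : MvPolynomial σ 𝕜) (x : σ → 𝕜) :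
    HasFDerivAt (fun y => eval y P)
      (∑ i, eval x (pderiv i P) • (ContinuousLinearMap.proj i : (σ → 𝕜) →L[𝕜] 𝕜)) x := by
  classical
  induction P using MvPolynomial.induction_on with
  | C a =>
    simp only [eval_C]
    refine (hasFDerivAt_const a x).congr_fderiv ?_
    ext v
    simp
  | add p q hp hq =>
    simp only [map_add]
    refine (hp.fun_add hq).congr_fderiv ?_
    ext v
    simp [Finset.sum_add_distrib, add_mul]
  | mul_X p j hp =>
    simp only [eval_mul, eval_X]
    refine (hp.fun_mul (hasFDerivAt_apply j x)).congr_fderiv ?_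
    ext v
    simp [pderiv_X, Pi.single_apply, apply_ite, add_mul, mul_assoc, Finset.sum_add_distrib,
      Finset.mul_sum]

end

end MvPolynomial

theorem pderiv'_eval {d : ℕ} (P : MvPolynomial (Fin d) ℝ) (i : Fin d) (x : Fin d → ℝ) :
    pderiv' d (fun y => MvPolynomial.eval y P) i x =
      MvPolynomial.eval x (MvPolynomial.pderiv i P) := by
  simp [pderiv', (MvPolynomial.hasFDerivAt_eval P x).fderiv, Pi.single_apply]

section MemPolySpace
variable {d m : ℕ} {f : (Fin d → ℝ) → ℝ}

theorem MemPolySpace.mono {m' : ℕ} (h : m ≤ m') (hf : MemPolySpace d m f) :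
    MemPolySpace d m' f :=
  let ⟨P, hP, hPf⟩ := hf
  ⟨P, hP.trans h, hPf⟩

theorem MemPolySpace.continuous_s9 (hf : MemPolySpace d m f) : Continuous f := by
  obtain ⟨P, -, hPf⟩ := hf
  rw [funext hPf]
  exact MvPolynomial.continuous_eval P

theorem MemPolySpace.sum {ι : Type*} [Fintype ι] {f : ι → (Fin d → ℝ) → ℝ}
    (hf : ∀ i, MemPolySpace d m (f i)) : MemPolySpace d m (fun x => ∑ i, f i x) := by
  choose P hP hPf using hf
  exact ⟨∑ i, P i, MvPolynomial.totalDegree_finsetSum_le fun i _ => hP i,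
    fun x => by simp [hPf]⟩

theorem MemPolySpace.mul_const (hf : MemPolySpace d m f) (c : ℝ) :
    MemPolySpace d m (fun x => f x * c) := by
  obtain ⟨P, hP, hPf⟩ := hf
  refine ⟨P * MvPolynomial.C c, (MvPolynomial.totalDegree_mul _ _).trans ?_,
    fun x => by simp [hPf]⟩
  simpa using hP

theorem memPolySpace_pderiv' (hf : MemPolySpace d (m + 1) f) (i : Fin d) :
    MemPolySpace d m (pderiv' d f i) := by
  obtain ⟨P, hP, hPf⟩ := hf
  refine ⟨MvPolynomial.pderiv i P, ?_, fun x => by rw [funext hPf, pderiv'_eval]⟩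
  have := MvPolynomial.totalDegree_pderiv_le (P := P) (i := i)
  omega

theorem MemPolySpace.continuous_pderiv' (hf : MemPolySpace d m f) (i : Fin d) :
    Continuous (pderiv' d f i) :=
  (memPolySpace_pderiv' (hf.mono m.le_succ) i).continuous_s9

theorem pderiv'_eq_zero_of_memPolySpace_zero (hf : MemPolySpace d 0 f) (i : Fin d) :
    pderiv' d f i = 0 := by
  obtain ⟨P, hP, hPf⟩ := hf
  ext x
  rw [funext hPf, pderiv'_eval,
    MvPolynomial.pderiv_eq_zero_of_totalDegree_eq_zero (Nat.le_zero.1 hP), map_zero, Pi.zero_apply]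

theorem MemPolySpaceInt.exists_memPolySpace {l : ℤ} (hf : MemPolySpaceInt d l f) :
    ∃ m, MemPolySpace d m f := by
  unfold MemPolySpaceInt at hf
  split_ifs at hf
  · exact ⟨0, 0, le_rfl, fun x => by simp [hf x]⟩
  · exact ⟨_, hf⟩

theorem memPolySpaceInt_sum_pderiv' {k : ℕ} {l : ℤ} (hkl : (k : ℤ) ≤ l + 1)
    {φ : Fin d → (Fin d → ℝ) → ℝ} (hφ : ∀ i, MemPolySpace d k (φ i)) :
    MemPolySpaceInt d l (fun x => ∑ i, pderiv' d (φ i) i x) := by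
  unfold MemPolySpaceInt
  split_ifs with hl
  · obtain rfl : k = 0 := by omega
    simp [pderiv'_eq_zero_of_memPolySpace_zero (hφ _)]
  · exact .sum fun i => memPolySpace_pderiv' ((hφ i).mono (by omega)) i

end MemPolySpace

section Integral
variable {α : Type*} [MeasurableSpace α] {μ : Measure α}

theorem Continuous.integrableOn_of_isBounded [PseudoMetricSpace α] [ProperSpace α]
    [OpensMeasurableSpace α] [IsFiniteMeasureOnCompacts μ] {E : Type*} [NormedAddCommGroup E]
    {f : α → E} (hf : Continuous f) {s : Set α} (hs : Bornology.IsBounded s) :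
    IntegrableOn f s μ :=
  (hf.continuousOn.integrableOn_compact' hs.isCompact_closure
    isClosed_closure.measurableSet).mono_set subset_closure

theorem Continuous.integrable_of_measure_compl_frontier_eq_zero [PseudoMetricSpace α]
    [ProperSpace α] [OpensMeasurableSpace α] [IsFiniteMeasure μ] {E : Type*}
    [NormedAddCommGroup E] {f : α → E} (hf : Continuous f) {s : Set α}
    (hs : Bornology.IsBounded s) (hμs : μ (frontier s)ᶜ = 0) : Integrable f μ := by
  have hK : IsCompact (frontier s) :=
    hs.isCompact_closure.of_isClosed_subset isClosed_frontier frontier_subset_closure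
  rw [← Measure.restrict_eq_self_of_ae_mem (ae_iff.2 hμs)]
  exact hf.continuousOn.integrableOn_compact' hK isClosed_frontier.measurableSet

theorem integral_mul_eq_sub_of_integral_sub_mul_eq_zero {p f g w : α → ℝ}
    (hp : Integrable (fun x => p x * w x) μ) (hf : Integrable (fun x => f x * w x) μ)
    (hg : Integrable (fun x => g x * w x) μ) (h : ∫ x, (p x - (f x - g x)) * w x ∂μ = 0) :
    ∫ x, p x * w x ∂μ = ∫ x, f x * w x ∂μ - ∫ x, g x * w x ∂μ := by
  simp only [sub_mul] at h
  have hfg : Integrable (fun x => f x * w x - g x * w x) μ := hf.sub hg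
  rw [integral_sub hp hfg, integral_sub hf hg] at h
  linarith

end Integral

theorem residual_identity_general (d k : ℕ) (l : ℤ)
    (hl : l = (k : ℤ) - 1 ∨ l = (k : ℤ) ∨ l = (k : ℤ) + 1)
    (T : Set (Fin d → ℝ))
    (hTbdd : Bornology.IsBounded T)
    (ι : Type) [Fintype ι]
    (μF : ι → Measure (Fin d → ℝ)) (hμFfin : ∀ F, IsFiniteMeasure (μF F))
    (hμFsupp : ∀ F, μF F (frontier T)ᶜ = 0)
    (nF : ι → Fin d → ℝ)
    -- integration by parts on T, against polynomial functions and vector fields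
    (hIBP : ∀ f : (Fin d → ℝ) → ℝ, (∃ m, MemPolySpace d m f) →
      ∀ φ : Fin d → (Fin d → ℝ) → ℝ, (∀ i, ∃ m, MemPolySpace d m (φ i)) →
        ∫ x in T, ∑ i, pderiv' d f i x * φ i x =
          -(∫ x in T, f x * ∑ i, pderiv' d (φ i) i x) +
            ∑ F, ∫ x, f x * ∑ i, φ i x * nF F i ∂(μF F))
    -- the local unknowns û_T = (vT, (vF F)_F) ∈ U_T^{k,l}
    (vT : (Fin d → ℝ) → ℝ) (hvT : MemPolySpaceInt d l vT)
    (vF : ι → (Fin d → ℝ) → ℝ) (hvF : ∀ F, MemPolySpace d k (vF F))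
    -- the gradient reconstruction G_T û_T
    (G : Fin d → (Fin d → ℝ) → ℝ) (hG : ∀ i, MemPolySpace d k (G i))
    (hGdef : ∀ φ : Fin d → (Fin d → ℝ) → ℝ, (∀ i, MemPolySpace d k (φ i)) →
      ∫ x in T, ∑ i, G i x * φ i x =
        -(∫ x in T, vT x * ∑ i, pderiv' d (φ i) i x) +
          ∑ F, ∫ x, vF F x * ∑ i, φ i x * nF F i ∂(μF F))
    -- the potential reconstruction r_T û_T ∈ P^{k+1}(T)
    (r : (Fin d → ℝ) → ℝ) (hr : MemPolySpace d (k + 1) r)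
    -- the difference operators δ_T û_T = π_T^l (r - vT) and δ_{TF} û_T = π_F^k (r - vF)
    (δT : (Fin d → ℝ) → ℝ) (hδT : MemPolySpaceInt d l δT)
    (hδTdef : ∀ w, MemPolySpaceInt d l w →
      ∫ x in T, (δT x - (r x - vT x)) * w x = 0)
    (δF : ι → (Fin d → ℝ) → ℝ) (hδF : ∀ F, MemPolySpace d k (δF F))
    (hδFdef : ∀ F, ∀ w, MemPolySpace d k w →
      ∫ x, (δF F x - (r x - vF F x)) * w x ∂(μF F) = 0) :
    ∀ φ : Fin d → (Fin d → ℝ) → ℝ, (∀ i, MemPolySpace d k (φ i)) →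
      ∫ x in T, ∑ i, (pderiv' d r i x - G i x - pderiv' d δT i x) * φ i x =
        ∑ F, ∫ x, (δF F x - δT x) * ∑ i, φ i x * nF F i ∂(μF F) := by
  intro φ hφ
  obtain ⟨_, hvT⟩ := hvT.exists_memPolySpace
  obtain ⟨_, hδT⟩ := hδT.exists_memPolySpace
  have hdiv := memPolySpaceInt_sum_pderiv' (l := l) (by omega) hφ
  have hφn : ∀ F, MemPolySpace d k (fun x => ∑ i, φ i x * nF F i) :=
    fun F => .sum fun i => (hφ i).mul_const _
  -- the continuity facts below are found by `fun_prop` in the integrability side goals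
  have hcr := hr.continuous_s9
  have hcvT := hvT.continuous_s9
  have hcδT := hδT.continuous_s9
  have hcvF := fun F => (hvF F).continuous_s9
  have hcδF := fun F => (hδF F).continuous_s9
  have hcG := fun i => (hG i).continuous_s9
  have hcφ := fun i => (hφ i).continuous_s9
  have hc_dr := hr.continuous_pderiv'
  have hc_dδT := hδT.continuous_pderiv'
  have hc_dφ := fun i => (hφ i).continuous_pderiv' i
  have hintT : ∀ f : (Fin d → ℝ) → ℝ, Continuous f → Integrable f (volume.restrict T) :=
    fun f hf => hf.integrableOn_of_isBounded hTbdd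
  have hintF : ∀ F, ∀ f : (Fin d → ℝ) → ℝ, Continuous f → Integrable f (μF F) := fun F f hf =>
    have := hμFfin F
    hf.integrable_of_measure_compl_frontier_eq_zero hTbdd (hμFsupp F)
  have hsplit : ∫ x in T, ∑ i, (pderiv' d r i x - G i x - pderiv' d δT i x) * φ i x =
      (∫ x in T, ∑ i, pderiv' d r i x * φ i x) - (∫ x in T, ∑ i, G i x * φ i x) -
        ∫ x in T, ∑ i, pderiv' d δT i x * φ i x := by
    simp only [sub_mul, Finset.sum_sub_distrib]
    rw [integral_sub, integral_sub] <;> exact hintT _ (by fun_prop)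
  have hcell : ∫ x in T, δT x * ∑ i, pderiv' d (φ i) i x =
      (∫ x in T, r x * ∑ i, pderiv' d (φ i) i x) - ∫ x in T, vT x * ∑ i, pderiv' d (φ i) i x :=
    integral_mul_eq_sub_of_integral_sub_mul_eq_zero (hintT _ (by fun_prop))
      (hintT _ (by fun_prop)) (hintT _ (by fun_prop)) (hδTdef _ hdiv)
  have hfaces : ∑ F, ∫ x, (δF F x - δT x) * ∑ i, φ i x * nF F i ∂(μF F) =
      (∑ F, ∫ x, r x * ∑ i, φ i x * nF F i ∂(μF F)) -
        (∑ F, ∫ x, vF F x * ∑ i, φ i x * nF F i ∂(μF F)) -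
          ∑ F, ∫ x, δT x * ∑ i, φ i x * nF F i ∂(μF F) := by
    simp only [← Finset.sum_sub_distrib]
    refine Finset.sum_congr rfl fun F _ => ?_
    rw [← integral_mul_eq_sub_of_integral_sub_mul_eq_zero (hintF F _ (by fun_prop))
      (hintF F _ (by fun_prop)) (hintF F _ (by fun_prop)) (hδFdef F _ (hφn F))]
    simp only [sub_mul]
    exact integral_sub (hintF F _ (by fun_prop)) (hintF F _ (by fun_prop))
  have hφ' : ∀ i, ∃ m, MemPolySpace d m (φ i) := fun i => ⟨k, hφ i⟩
  rw [hsplit, hfaces, hIBP r ⟨_, hr⟩ φ hφ', hGdef φ hφ, hIBP δT ⟨_, hδT⟩ φ hφ', hcell]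
  ring

/-- **Residual identity for the difference operators of the DSGD construction.**
Let `T` be a mesh element with faces `ι`, surface measures `μF`, outward unit normals
`nF`, let `k ≥ 0` and `l ∈ {k-1,k,k+1}`, and let `û_T = (vT,(vF)_F) ∈ U_T^{k,l}`.
With `G` the gradient reconstruction, `r = r_T û_T ∈ P^{k+1}(T)` the potential
reconstruction, `δT := π_T^l (r - vT)` and `δF F := π_F^k (r - vF F)` the difference
operators, for all `φ ∈ P^k(T)^d`,
`((∇r - G û_T) - ∇δT, φ)_T = ∑_F ((δF F - δT), φ·n_{TF})_F`. -/
theorem residual_identity (d k : ℕ) (l : ℤ)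
    (hl : l = (k : ℤ) - 1 ∨ l = (k : ℤ) ∨ l = (k : ℤ) + 1)
    (T : Set (Fin d → ℝ))
    (hTopen : IsOpen T) (hTbdd : Bornology.IsBounded T) (hTpos : 0 < volume T)
    (ι : Type) [Fintype ι]
    (μF : ι → Measure (Fin d → ℝ)) (hμFfin : ∀ F, IsFiniteMeasure (μF F))
    (hμFsupp : ∀ F, μF F (frontier T)ᶜ = 0)
    (nF : ι → Fin d → ℝ)
    -- integration by parts on T, against polynomial functions and vector fields
    (hIBP : ∀ f : (Fin d → ℝ) → ℝ, (∃ m, MemPolySpace d m f) →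
      ∀ φ : Fin d → (Fin d → ℝ) → ℝ, (∀ i, ∃ m, MemPolySpace d m (φ i)) →
        ∫ x in T, ∑ i, pderiv' d f i x * φ i x =
          -(∫ x in T, f x * ∑ i, pderiv' d (φ i) i x) +
            ∑ F, ∫ x, f x * ∑ i, φ i x * nF F i ∂(μF F))
    -- the local unknowns û_T = (vT, (vF F)_F) ∈ U_T^{k,l}
    (vT : (Fin d → ℝ) → ℝ) (hvT : MemPolySpaceInt d l vT)
    (vF : ι → (Fin d → ℝ) → ℝ) (hvF : ∀ F, MemPolySpace d k (vF F))
    -- the gradient reconstruction G_T û_T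
    (G : Fin d → (Fin d → ℝ) → ℝ) (hG : ∀ i, MemPolySpace d k (G i))
    (hGdef : ∀ φ : Fin d → (Fin d → ℝ) → ℝ, (∀ i, MemPolySpace d k (φ i)) →
      ∫ x in T, ∑ i, G i x * φ i x =
        -(∫ x in T, vT x * ∑ i, pderiv' d (φ i) i x) +
          ∑ F, ∫ x, vF F x * ∑ i, φ i x * nF F i ∂(μF F))
    -- the potential reconstruction r_T û_T ∈ P^{k+1}(T)
    (r : (Fin d → ℝ) → ℝ) (hr : MemPolySpace d (k + 1) r)
    (hrdef : ∀ w, MemPolySpace d (k + 1) w →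
      ∫ x in T, ∑ i, pderiv' d r i x * pderiv' d w i x =
        -(∫ x in T, vT x * lap' d w x) +
          ∑ F, ∫ x, vF F x * ∑ i, pderiv' d w i x * nF F i ∂(μF F))
    (hravg : ∫ x in T, (r x - vT x) = 0)
    -- the difference operators δ_T û_T = π_T^l (r - vT) and δ_{TF} û_T = π_F^k (r - vF)
    (δT : (Fin d → ℝ) → ℝ) (hδT : MemPolySpaceInt d l δT)
    (hδTdef : ∀ w, MemPolySpaceInt d l w →
      ∫ x in T, (δT x - (r x - vT x)) * w x = 0)
    (δF : ι → (Fin d → ℝ) → ℝ) (hδF : ∀ F, MemPolySpace d k (δF F))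
    (hδFdef : ∀ F, ∀ w, MemPolySpace d k w →
      ∫ x, (δF F x - (r x - vF F x)) * w x ∂(μF F) = 0) :
    ∀ φ : Fin d → (Fin d → ℝ) → ℝ, (∀ i, MemPolySpace d k (φ i)) →
      ∫ x in T, ∑ i, (pderiv' d r i x - G i x - pderiv' d δT i x) * φ i x =
        ∑ F, ∫ x, (δF F x - δT x) * ∑ i, φ i x * nF F i ∂(μF F) :=
  residual_identity_general d k l hl T hTbdd ι μF hμFfin hμFsupp nF hIBP vT hvT vF hvF G hG hGdef r
    hr δT hδT hδTdef δF hδF hδFdef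
end
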